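/- If [y] is a vertex of Γ_E(R) with deg[y] > deg[x] for every other vertex [x], then ann(y) is a maximal element of F = {ann(z) : 0 ≠ z ∈ R} and hence is an associated prime of R. -/

import Mathlib

open scoped Classical

noncomputable section

/-- The annihilator ideal of an element `x` of a commutative ring `R`. -/
def ann (R : Type*) [CommRing R] (x : R) : Ideal R := Ideal.torsionOf R R x

/-- The type of nonzero zero divisors of `R`. -/
def ZD (R : Type*) [CommRing R] : Type _ :=
  {x : R // x ≠ 0 ∧ ∃ y : R, y ≠ 0 ∧ x * y = 0}

/-- Two zero divisors are equivalent iff they have the same annihilator. -/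
instance annSetoid (R : Type*) [CommRing R] : Setoid (ZD R) :=
  ⟨fun a b => ann R a.1 = ann R b.1,
   fun _ => rfl, Eq.symm, Eq.trans⟩

/-- The vertex set of `Γ_E(R)`: equivalence classes of nonzero zero divisors. -/
def GammaEV (R : Type*) [CommRing R] : Type _ := Quotient (annSetoid R)

/-- The class of a nonzero zero divisor. -/
def cls (R : Type*) [CommRing R] (a : ZD R) : GammaEV R :=
  Quotient.mk (annSetoid R) a

/-- The graph `Γ_E(R)` of equivalence classes of zero divisors. -/
def gammaE (R : Type*) [CommRing R] : SimpleGraph (GammaEV R) where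
  Adj u v := u ≠ v ∧ ∃ a b : ZD R, cls R a = u ∧ cls R b = v ∧ a.1 * b.1 = 0
  symm := by
    constructor
    rintro u v ⟨huv, a, b, ha, hb, hab⟩
    exact ⟨huv.symm, b, a, hb, ha, by rwa [mul_comm] at hab⟩
  loopless := by constructor; rintro u ⟨h, -⟩; exact h rfl

/-- `I` is a maximal element of the family `F = {ann x : 0 ≠ x ∈ R}`. -/
def MaxAnn (R : Type*) [CommRing R] (I : Ideal R) : Prop :=
  (∃ x : R, x ≠ 0 ∧ I = ann R x) ∧
    ∀ y : R, y ≠ 0 → I ≤ ann R y → I = ann R y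

/-! If `ann b ⊊ ann y` with `y ≠ 0`, then `y` kills whatever `b` kills, so it is again a
zero divisor and its class is adjacent to every neighbour of `[b]` other than `[y]` itself.
Exchanging `[b]` and `[y]` therefore maps the neighbourhood of `[b]` injectively into that of
`[y]`, contradicting the strict maximality of `deg [b]`. Maximal annihilators are prime by the
usual argument: if `r s x = 0` but `r x ≠ 0`, maximality forces `ann x = ann (r x) ∋ s`. -/

section

variable {R : Type*} [CommRing R]

lemma mem_ann {x a : R} : a ∈ ann R x ↔ a * x = 0 := by
  rw [ann, Ideal.mem_torsionOf_iff, smul_eq_mul]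

lemma ann_le_ann_mul (x r : R) : ann R x ≤ ann R (r * x) := fun a ha => by
  rw [mem_ann] at ha ⊢
  rw [mul_left_comm, ha, mul_zero]

lemma MaxAnn.isPrime {I : Ideal R} (h : MaxAnn R I) : I.IsPrime := by
  obtain ⟨⟨x, hx, rfl⟩, hmax⟩ := h
  refine ⟨by rwa [ann, Ne, Ideal.torsionOf_eq_top_iff], fun {r s} hrs =>
    or_iff_not_imp_left.mpr fun hr => ?_⟩
  have hrx : r * x ≠ 0 := fun h0 => hr (mem_ann.mpr h0)
  rw [hmax _ hrx (ann_le_ann_mul x r), mem_ann, mul_left_comm, ← mul_assoc]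
  exact mem_ann.mp hrs

lemma mul_eq_zero_of_ann_eq {a a' b b' : R} (ha : ann R a = ann R a') (hb : ann R b = ann R b')
    (h : a * b = 0) : a' * b' = 0 := by
  have hab' : a ∈ ann R b' := hb ▸ mem_ann.mpr h
  have hba' : b' ∈ ann R a' := ha ▸ mem_ann.mpr (by rw [mul_comm]; exact mem_ann.mp hab')
  rw [mul_comm]
  exact mem_ann.mp hba'

def ZD.ofAnnLE (a : ZD R) {y : R} (hy : y ≠ 0) (h : ann R a.1 ≤ ann R y) : ZD R :=
  ⟨y, hy, by
    obtain ⟨z, hz, haz⟩ := a.2.2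
    exact ⟨z, hz, by rw [mul_comm]; exact mem_ann.mp (h (mem_ann.mpr (by rwa [mul_comm])))⟩⟩

lemma cls_surjective : Function.Surjective (cls R) :=
  Quotient.mk_surjective

lemma cls_eq_cls_iff {a b : ZD R} : cls R a = cls R b ↔ ann R a.1 = ann R b.1 :=
  Quotient.eq

lemma gammaE_adj_cls_iff {a b : ZD R} :
    (gammaE R).Adj (cls R a) (cls R b) ↔ cls R a ≠ cls R b ∧ a.1 * b.1 = 0 :=
  ⟨fun ⟨hne, _, _, ha, hb, h⟩ =>
    ⟨hne, mul_eq_zero_of_ann_eq (cls_eq_cls_iff.mp ha) (cls_eq_cls_iff.mp hb) h⟩,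
   fun ⟨hne, h⟩ => ⟨hne, a, b, rfl, rfl, h⟩⟩

lemma gammaE_adj_of_ann_le {a c : ZD R} (hac : ann R a.1 ≤ ann R c.1) {v : GammaEV R}
    (hv : (gammaE R).Adj v (cls R a)) (hvc : v ≠ cls R c) : (gammaE R).Adj v (cls R c) := by
  obtain ⟨d, rfl⟩ := cls_surjective v
  rw [gammaE_adj_cls_iff] at hv ⊢
  exact ⟨hvc, mem_ann.mp (hac (mem_ann.mpr hv.2))⟩

lemma encard_neighborSet_le_of_ann_le {a c : ZD R} (hac : ann R a.1 ≤ ann R c.1) :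
    ((gammaE R).neighborSet (cls R a)).encard ≤ ((gammaE R).neighborSet (cls R c)).encard := by
  refine Set.encard_le_encard_of_injOn (f := Equiv.swap (cls R a) (cls R c))
    (fun v (hv : (gammaE R).Adj _ v) => ?_) (Equiv.injective _).injOn
  by_cases hvc : v = cls R c
  · subst hvc
    rw [SimpleGraph.mem_neighborSet, Equiv.swap_apply_right]
    exact hv.symm
  · rw [SimpleGraph.mem_neighborSet, Equiv.swap_apply_of_ne_of_ne hv.ne' hvc]
    exact (gammaE_adj_of_ann_le hac hv.symm hvc).symm

end

theorem stmt15_general (R : Type*) [CommRing R] (b : ZD R)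
    (h : ∀ v : GammaEV R, v ≠ cls R b →
      ((gammaE R).neighborSet v).encard <
        ((gammaE R).neighborSet (cls R b)).encard) :
    MaxAnn R (ann R b.1) ∧ (ann R b.1).IsPrime := by
  have hmax : MaxAnn R (ann R b.1) := by
    refine ⟨⟨b.1, b.2.1, rfl⟩, fun y hy hby => ?_⟩
    by_contra hne
    let c := ZD.ofAnnLE b hy hby
    have hcb : cls R c ≠ cls R b := fun hcb => hne (cls_eq_cls_iff.mp hcb).symm
    exact (h (cls R c) hcb).not_ge (encard_neighborSet_le_of_ann_le hby)
  exact ⟨hmax, hmax.isPrime⟩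

theorem stmt15 (R : Type*) [CommRing R] [IsNoetherianRing R] (b : ZD R)
    (h : ∀ v : GammaEV R, v ≠ cls R b →
      ((gammaE R).neighborSet v).encard <
        ((gammaE R).neighborSet (cls R b)).encard) :
    MaxAnn R (ann R b.1) ∧ (ann R b.1).IsPrime :=
  stmt15_general R b h
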